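/- arXiv:1908.07949 — 4 statements merged into one kernel-verified Lean document; each statement's English description precedes it below -/
import Mathlib

section
/- Let D ∈ ℝ^{m×m} and R ∈ ℝ^{p×p} be symmetric positive definite, L ∈ ℝ^{m×m} invertible, H ∈ ℝ^{p×m}. Then the symmetric matrix A₃ = [[D, 0, L], [0, R, H], [Lᵀ, Hᵀ, 0]] has exactly m + p positive eigenvalues and m negative eigenvalues (and no zero eigenvalues). -/
open Matrix

/-!
`A₃` is the saddle point matrix `K = [[A, B], [Bᴴ, 0]]` with `A = diag(D, R)` positive definite
and `B = [L; H]` of full column rank. With `P₁ = [I; 0]` and `P₂ = [-A⁻¹B; I]` one gets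
`P₁ᴴ K P₁ = A` and `P₂ᴴ K P₂ = -Bᴴ A⁻¹ B`, both definite. Instead of Sylvester's law of inertia
we use the half of its proof that is needed: if `Pᴴ K P` is positive definite and `P` has `k`
columns, then `K` has at least `k` positive eigenvalues, for otherwise some nonzero `P u` would
lie in the span of the eigenvectors with nonpositive eigenvalues. This gives at least `dim A`
positive and `dim Bᴴ A⁻¹ B` negative eigenvalues, which already exhausts the size of `K`.
-/

open Finset
open scoped ComplexOrder

theorem card_filter_pos_neg_eq_of_le {n : Type*} [Fintype n] (d : n → ℝ) {a b : ℕ}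
    (ha : a ≤ #{i | 0 < d i}) (hb : b ≤ #{i | d i < 0}) (hab : a + b = Fintype.card n) :
    #{i | 0 < d i} = a ∧ #{i | d i < 0} = b ∧ ∀ i, d i ≠ 0 := by
  classical
  have hdisj : Disjoint ({i | 0 < d i} : Finset n) ({i | d i < 0} : Finset n) :=
    disjoint_filter.2 fun _ _ h h' => lt_asymm h h'
  have hle : #{i | 0 < d i} + #{i | d i < 0} ≤ Fintype.card n :=
    card_union_of_disjoint hdisj ▸ card_le_univ _
  have hcover : ({i | 0 < d i} : Finset n) ∪ ({i | d i < 0} : Finset n) = univ :=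
    eq_univ_of_card _ (by rw [card_union_of_disjoint hdisj]; omega)
  refine ⟨by omega, by omega, fun i => ?_⟩
  have hi := hcover ▸ mem_univ i
  simp only [mem_union, mem_filter, mem_univ, true_and] at hi
  exact hi.elim ne_of_gt ne_of_lt

namespace Matrix

variable {ι κ n 𝕜 : Type*} [RCLike 𝕜]

theorem card_le_card_filter_pos_of_posDef_conjTranspose_mul_diagonal_mul [Fintype ι]
    [Fintype n] [DecidableEq n] {d : n → ℝ} (Q : Matrix n ι 𝕜)
    (hQ : (Qᴴ * diagonal (RCLike.ofReal ∘ d : n → 𝕜) * Q).PosDef) :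
    Fintype.card ι ≤ #{i | 0 < d i} := by
  let S : Finset n := {i | 0 < d i}
  let restrictQ : (ι → 𝕜) →ₗ[𝕜] (S → 𝕜) :=
    (LinearMap.funLeft 𝕜 𝕜 Subtype.val).comp (mulVecLin Q)
  suffices Function.Injective restrictQ by
    simpa using LinearMap.finrank_le_finrank_of_injective this
  refine (injective_iff_map_eq_zero restrictQ).2 fun u hu => ?_
  by_contra hu0
  have hvanish : ∀ i ∈ S, (Q *ᵥ u) i = 0 := fun i hi => congr_fun hu ⟨i, hi⟩
  have hnonpos : star u ⬝ᵥ (Qᴴ * diagonal (RCLike.ofReal ∘ d : n → 𝕜) * Q) *ᵥ u ≤ 0 := by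
    rw [← mulVec_mulVec, ← mulVec_mulVec, dotProduct_mulVec, ← star_mulVec]
    refine sum_nonpos fun i _ => ?_
    by_cases hi : i ∈ S
    · simp [hvanish i hi]
    · have hdi : (d i : 𝕜) ≤ 0 := by simpa [S] using hi
      rw [mulVec_diagonal, Pi.star_apply, Function.comp_apply, mul_left_comm]
      exact mul_nonpos_of_nonpos_of_nonneg hdi (star_mul_self_nonneg _)
  exact (hQ.dotProduct_mulVec_pos hu0).not_ge hnonpos

namespace IsHermitian

variable [Fintype n] [DecidableEq n] {A : Matrix n n 𝕜}

theorem conjTranspose_mul_mul_eq (hA : A.IsHermitian) (P : Matrix n ι 𝕜) :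
    Pᴴ * A * P = (star (hA.eigenvectorUnitary : Matrix n n 𝕜) * P)ᴴ *
      diagonal (RCLike.ofReal ∘ hA.eigenvalues : n → 𝕜) *
      (star (hA.eigenvectorUnitary : Matrix n n 𝕜) * P) := by
  conv_lhs => rw [hA.spectral_theorem, Unitary.conjStarAlgAut_apply]
  simp only [conjTranspose_mul, star_eq_conjTranspose, conjTranspose_conjTranspose,
    Matrix.mul_assoc]

theorem card_le_card_filter_eigenvalues_pos [Fintype ι] (hA : A.IsHermitian) (P : Matrix n ι 𝕜)
    (hP : (Pᴴ * A * P).PosDef) :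
    Fintype.card ι ≤ #{i | 0 < hA.eigenvalues i} :=
  card_le_card_filter_pos_of_posDef_conjTranspose_mul_diagonal_mul _
    (hA.conjTranspose_mul_mul_eq P ▸ hP)

theorem card_le_card_filter_eigenvalues_neg [Fintype ι] (hA : A.IsHermitian) (P : Matrix n ι 𝕜)
    (hP : (-(Pᴴ * A * P)).PosDef) :
    Fintype.card ι ≤ #{i | hA.eigenvalues i < 0} := by
  have hneg : -(Pᴴ * A * P) = (star (hA.eigenvectorUnitary : Matrix n n 𝕜) * P)ᴴ *
      diagonal (RCLike.ofReal ∘ fun i => -hA.eigenvalues i : n → 𝕜) *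
      (star (hA.eigenvectorUnitary : Matrix n n 𝕜) * P) := by
    rw [hA.conjTranspose_mul_mul_eq P]
    simp only [Function.comp_def, RCLike.ofReal_neg, ← diagonal_neg, Matrix.mul_neg,
      Matrix.neg_mul]
  have := card_le_card_filter_pos_of_posDef_conjTranspose_mul_diagonal_mul _ (hneg ▸ hP)
  simpa only [Left.neg_pos_iff] using this

end IsHermitian

theorem PosDef.fromBlocks_zero [Fintype ι] [Fintype κ] {A : Matrix ι ι 𝕜} {D : Matrix κ κ 𝕜}
    (hA : A.PosDef) (hD : D.PosDef) : (fromBlocks A 0 0 D).PosDef := by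
  refine .of_dotProduct_mulVec_pos (hA.isHermitian.fromBlocks (by simp) hD.isHermitian)
    fun x hx => ?_
  rw [← Sum.elim_comp_inl_inr x, fromBlocks_mulVec, Function.star_sumElim,
    sumElim_dotProduct_sumElim]
  simp only [zero_mulVec, add_zero, zero_add]
  have hA' := hA.posSemidef.dotProduct_mulVec_nonneg (x ∘ Sum.inl)
  have hD' := hD.posSemidef.dotProduct_mulVec_nonneg (x ∘ Sum.inr)
  by_cases hl : x ∘ Sum.inl = 0
  · have hr : x ∘ Sum.inr ≠ 0 := fun hr => hx (by rw [← Sum.elim_comp_inl_inr x, hl, hr]; simp)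
    exact add_pos_of_nonneg_of_pos hA' (hD.dotProduct_mulVec_pos hr)
  · exact add_pos_of_pos_of_nonneg (hA.dotProduct_mulVec_pos hl) hD'

theorem fromRows_mulVec_injective [Fintype κ] {A₁ : Matrix ι κ 𝕜} (A₂ : Matrix n κ 𝕜)
    (h : Function.Injective A₁.mulVec) : Function.Injective (fromRows A₁ A₂).mulVec :=
  fun x y hxy => h (by simpa [fromRows_mulVec] using congr_arg (· ∘ Sum.inl) hxy)

theorem inertia_fromBlocks_zero₂₂ [Fintype ι] [Fintype κ] [DecidableEq ι] [DecidableEq κ]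
    {A : Matrix ι ι 𝕜} {B : Matrix ι κ 𝕜} (hA : A.PosDef) (hB : Function.Injective B.mulVec)
    (hK : (fromBlocks A B Bᴴ 0).IsHermitian) :
    #{i | 0 < hK.eigenvalues i} = Fintype.card ι ∧
      #{i | hK.eigenvalues i < 0} = Fintype.card κ ∧ ∀ i, hK.eigenvalues i ≠ 0 := by
  have hAA : A * A⁻¹ = 1 := mul_nonsing_inv _ ((isUnit_iff_isUnit_det A).1 hA.isUnit)
  -- Without the ascriptions on `1` and `0`, `*` elaborates to `CStarMatrix` multiplication.
  refine card_filter_pos_neg_eq_of_le _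
    (hK.card_le_card_filter_eigenvalues_pos (fromRows (1 : Matrix ι ι 𝕜) (0 : Matrix κ ι 𝕜)) ?_)
    (hK.card_le_card_filter_eigenvalues_neg (fromRows (-(A⁻¹ * B)) (1 : Matrix κ κ 𝕜)) ?_)
    (Fintype.card_sum ..).symm
  · convert hA using 1
    simp [conjTranspose_fromRows_eq_fromCols_conjTranspose, fromCols_mul_fromBlocks,
      fromCols_mul_fromRows]
  · convert hA.inv.conjTranspose_mul_mul_same hB using 1
    simp [Matrix.mul_assoc _ (fromBlocks A B Bᴴ 0), fromBlocks_mul_fromRows,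
      conjTranspose_fromRows_eq_fromCols_conjTranspose, fromCols_mul_fromRows, ← Matrix.mul_assoc,
      hAA]

end Matrix

/-- Inertia of the 3×3-block saddle point matrix: if `D` and `R` are symmetric positive definite
and `L` is invertible, then `A₃ = [[D, 0, L], [0, R, H], [Lᵀ, Hᵀ, 0]]` has exactly `m + p`
positive eigenvalues, `m` negative eigenvalues, and no zero eigenvalues. -/
theorem inertia_A3 {m p : ℕ} (D L : Matrix (Fin m) (Fin m) ℝ)
    (R : Matrix (Fin p) (Fin p) ℝ) (H : Matrix (Fin p) (Fin m) ℝ)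
    (hD : D.PosDef) (hR : R.PosDef) (hL : IsUnit L)
    (A3 : Matrix ((Fin m ⊕ Fin p) ⊕ Fin m) ((Fin m ⊕ Fin p) ⊕ Fin m) ℝ)
    (hA3 : A3 = Matrix.fromBlocks (Matrix.fromBlocks D 0 0 R)
      (Matrix.of (Sum.elim L H)) (Matrix.of (Sum.elim L H))ᴴ 0)
    (hA3herm : A3.IsHermitian) :
    (Finset.univ.filter fun i => 0 < hA3herm.eigenvalues i).card = m + p ∧
      (Finset.univ.filter fun i => hA3herm.eigenvalues i < 0).card = m ∧
      ∀ i, hA3herm.eigenvalues i ≠ 0 := by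
  subst hA3
  have hB : Function.Injective (of (Sum.elim L H)).mulVec :=
    fromRows_mulVec_injective H (mulVec_injective_iff_isUnit.2 hL)
  simpa only [Fintype.card_sum, Fintype.card_fin] using
    inertia_fromBlocks_zero₂₂ (hD.fromBlocks_zero hR) hB hA3herm
end

section
/- Let C ∈ ℝ^{m×m} be symmetric positive definite and E ∈ ℝ^{m×n} (n ≤ m) have full column rank. Then every negative eigenvalue λ of the saddle point matrix A = [[C, E], [Eᵀ, 0]] satisfies (1/2)(μ_min − sqrt(μ_min² + 4σ_max²)) ≤ λ ≤ (1/2)(μ_max − sqrt(μ_max² + 4σ_min²)), where μ_min, μ_max are the extreme eigenvalues of C and σ_min, σ_max the extreme singular values of E. -/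
/-!
Let `(x, y)` be an eigenvector for the eigenvalue `λ < 0`, so `C x + E y = λ x` and `Eᵀ x = λ y`.
Then `x ≠ 0`, `y ≠ 0` (as `C` is positive definite) and `⟪x, C x⟫ = λ (‖x‖² - ‖y‖²)`.
For the lower bound, `λ² ‖y‖² = ‖Eᵀ x‖² ≤ σ_max² ‖x‖²` and `⟪x, C x⟫ ≥ μ_min ‖x‖²` give
`λ² ≤ μ_min λ + σ_max²`. For the upper bound, `E y = (λ - C) x` together with
`‖C x‖² ≤ μ_max ⟪x, C x⟫` and `⟪x, C x⟫ ≤ μ_max ‖x‖²` gives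
`σ_min² ‖y‖² ≤ ‖E y‖² ≤ (λ² - μ_max λ) ‖y‖²`.
Each quadratic inequality places `λ` on the correct side of the negative root.
-/

open Matrix
open scoped MatrixOrder

namespace Matrix

variable {m n : Type*} [Fintype m] [Fintype n]

lemma dotProduct_conjTranspose_mul_self_mulVec (E : Matrix m n ℝ) (z : n → ℝ) :
    z ⬝ᵥ (Eᴴ * E) *ᵥ z = (E *ᵥ z) ⬝ᵥ (E *ᵥ z) := by
  rw [← mulVec_mulVec, conjTranspose_eq_transpose_of_trivial, dotProduct_mulVec z Eᵀ,
    vecMul_transpose, dotProduct_comm]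

lemma fromBlocks_mulVec_eq_smul {R : Type*} [CommRing R] {A : Matrix m m R} {B : Matrix m n R}
    {C : Matrix n m R} {D : Matrix n n R} {v : m ⊕ n → R} {l : R}
    (h : fromBlocks A B C D *ᵥ v = l • v) :
    A *ᵥ (v ∘ Sum.inl) + B *ᵥ (v ∘ Sum.inr) = l • (v ∘ Sum.inl) ∧
      C *ᵥ (v ∘ Sum.inl) + D *ᵥ (v ∘ Sum.inr) = l • (v ∘ Sum.inr) := by
  rw [fromBlocks_mulVec] at h
  exact ⟨funext fun i => congrFun h (Sum.inl i), funext fun j => congrFun h (Sum.inr j)⟩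

lemma dotProduct_self_nonneg (x : n → ℝ) : 0 ≤ x ⬝ᵥ x := by
  simpa using dotProduct_star_self_nonneg x

lemma dotProduct_self_pos {x : n → ℝ} (hx : x ≠ 0) : 0 < x ⬝ᵥ x := by
  simpa using dotProduct_star_self_pos_iff.2 hx

/-- Cauchy–Schwarz applied to `‖Eᵀ x‖² = ⟪x, E Eᵀ x⟫`. -/
lemma transpose_mulVec_dotProduct_self_le {E : Matrix m n ℝ} {s : ℝ} (hs : 0 ≤ s)
    (hE : ∀ z, (E *ᵥ z) ⬝ᵥ (E *ᵥ z) ≤ s * (z ⬝ᵥ z)) (x : m → ℝ) :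
    (Eᵀ *ᵥ x) ⬝ᵥ (Eᵀ *ᵥ x) ≤ s * (x ⬝ᵥ x) := by
  set z := Eᵀ *ᵥ x
  have hzz : z ⬝ᵥ z = x ⬝ᵥ E *ᵥ z := by
    rw [dotProduct_mulVec, vecMul_transpose, dotProduct_comm]
  have hcs : (x ⬝ᵥ E *ᵥ z) ^ 2 ≤ (x ⬝ᵥ x) * ((E *ᵥ z) ⬝ᵥ (E *ᵥ z)) := by
    simpa [dotProduct, sq] using Finset.sum_mul_sq_le_sq_mul_sq Finset.univ x (E *ᵥ z)
  rcases (dotProduct_self_nonneg z).eq_or_lt with hz | hz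
  · rw [← hz]
    exact mul_nonneg hs (dotProduct_self_nonneg x)
  · refine le_of_mul_le_mul_right ?_ hz
    calc z ⬝ᵥ z * z ⬝ᵥ z = (x ⬝ᵥ E *ᵥ z) ^ 2 := by rw [hzz, sq]
      _ ≤ (x ⬝ᵥ x) * ((E *ᵥ z) ⬝ᵥ (E *ᵥ z)) := hcs
      _ ≤ (x ⬝ᵥ x) * (s * (z ⬝ᵥ z)) :=
        mul_le_mul_of_nonneg_left (hE z) (dotProduct_self_nonneg x)
      _ = s * (x ⬝ᵥ x) * (z ⬝ᵥ z) := by ring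

end Matrix

namespace Matrix.IsHermitian

variable {n : Type*} [Fintype n] [DecidableEq n] {A : Matrix n n ℝ}

lemma iInf_eigenvalues_mul_dotProduct_self_le (hA : A.IsHermitian) (x : n → ℝ) :
    (⨅ i, hA.eigenvalues i) * (x ⬝ᵥ x) ≤ x ⬝ᵥ A *ᵥ x := by
  have h : algebraMap ℝ (Matrix n n ℝ) (⨅ i, hA.eigenvalues i) ≤ A := by
    rw [algebraMap_le_iff_le_spectrum (ha := hA.isSelfAdjoint),
      hA.spectrum_real_eq_range_eigenvalues]
    rintro _ ⟨i, rfl⟩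
    exact ciInf_le (Set.finite_range _).bddBelow i
  simpa [sub_mulVec, dotProduct_sub, Algebra.algebraMap_eq_smul_one, smul_mulVec] using
    (le_iff.1 h).dotProduct_mulVec_nonneg x

lemma dotProduct_mulVec_le_iSup_eigenvalues_mul (hA : A.IsHermitian) (x : n → ℝ) :
    x ⬝ᵥ A *ᵥ x ≤ (⨆ i, hA.eigenvalues i) * (x ⬝ᵥ x) := by
  have h : A ≤ algebraMap ℝ (Matrix n n ℝ) (⨆ i, hA.eigenvalues i) := by
    rw [le_algebraMap_iff_spectrum_le (ha := hA.isSelfAdjoint),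
      hA.spectrum_real_eq_range_eigenvalues]
    rintro _ ⟨i, rfl⟩
    exact le_ciSup (Set.finite_range _).bddAbove i
  simpa [sub_mulVec, dotProduct_sub, Algebra.algebraMap_eq_smul_one, smul_mulVec] using
    (le_iff.1 h).dotProduct_mulVec_nonneg x

/-- `A² ≤ s A` because `t ↦ t (s - t)` is nonnegative on the spectrum. -/
lemma mulVec_dotProduct_mulVec_le (hA : A.IsHermitian) {s : ℝ}
    (h0 : ∀ i, 0 ≤ hA.eigenvalues i) (hs : ∀ i, hA.eigenvalues i ≤ s) (x : n → ℝ) :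
    (A *ᵥ x) ⬝ᵥ (A *ᵥ x) ≤ s * (x ⬝ᵥ A *ᵥ x) := by
  have h : A * A ≤ s • A := by
    have : 0 ≤ cfc (fun t : ℝ => s * t - t * t) A := by
      apply cfc_nonneg
      rw [hA.spectrum_real_eq_range_eigenvalues]
      rintro _ ⟨i, rfl⟩
      nlinarith [h0 i, hs i]
    rwa [cfc_sub .., cfc_const_mul .., cfc_mul .., cfc_id' .., sub_nonneg] at this
  have hAA : x ⬝ᵥ (A * A) *ᵥ x = (A *ᵥ x) ⬝ᵥ (A *ᵥ x) := by
    rw [← mulVec_mulVec, dotProduct_mulVec, ← mulVec_transpose,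
      ← conjTranspose_eq_transpose_of_trivial, hA.eq]
  have := (le_iff.1 h).dotProduct_mulVec_nonneg x
  rwa [star_trivial, sub_mulVec, dotProduct_sub, hAA, smul_mulVec, dotProduct_smul, smul_eq_mul,
    sub_nonneg] at this

end Matrix.IsHermitian

namespace Matrix

variable {m n : Type*} [Fintype m] [Fintype n] [DecidableEq n]

lemma sqrt_iInf_eigenvalues_sq_mul_le (E : Matrix m n ℝ) (z : n → ℝ) :
    √(⨅ i, (isHermitian_conjTranspose_mul_self E).eigenvalues i) ^ 2 * (z ⬝ᵥ z) ≤
      (E *ᵥ z) ⬝ᵥ (E *ᵥ z) := by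
  rw [Real.sq_sqrt (Real.iInf_nonneg (eigenvalues_conjTranspose_mul_self_nonneg E)),
    ← dotProduct_conjTranspose_mul_self_mulVec]
  exact (isHermitian_conjTranspose_mul_self E).iInf_eigenvalues_mul_dotProduct_self_le z

lemma mulVec_dotProduct_self_le_sqrt_iSup_eigenvalues_sq_mul (E : Matrix m n ℝ) (z : n → ℝ) :
    (E *ᵥ z) ⬝ᵥ (E *ᵥ z) ≤
      √(⨆ i, (isHermitian_conjTranspose_mul_self E).eigenvalues i) ^ 2 * (z ⬝ᵥ z) := by
  rw [Real.sq_sqrt (Real.iSup_nonneg (eigenvalues_conjTranspose_mul_self_nonneg E)),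
    ← dotProduct_conjTranspose_mul_self_mulVec]
  exact (isHermitian_conjTranspose_mul_self E).dotProduct_mulVec_le_iSup_eigenvalues_mul z

end Matrix

namespace Matrix

variable {m n : Type*} [Fintype m] {C : Matrix m m ℝ} {E : Matrix m n ℝ} {x : m → ℝ} {y : n → ℝ}
  {l : ℝ}

lemma saddlePoint_left_ne_zero (hl : l ≠ 0) (hy : Eᵀ *ᵥ x = l • y) (hy0 : y ≠ 0) : x ≠ 0 := by
  rintro rfl
  rw [mulVec_zero, eq_comm, smul_eq_zero] at hy
  exact hy.elim hl hy0

variable [Fintype n]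

lemma saddlePoint_dotProduct_mulVec_eq (hx : C *ᵥ x + E *ᵥ y = l • x)
    (hy : Eᵀ *ᵥ x = l • y) : x ⬝ᵥ C *ᵥ x = l * (x ⬝ᵥ x - y ⬝ᵥ y) := by
  have hxEy : x ⬝ᵥ E *ᵥ y = l * (y ⬝ᵥ y) := by
    rw [dotProduct_mulVec, ← mulVec_transpose, hy, smul_dotProduct, smul_eq_mul]
  have := congrArg (x ⬝ᵥ ·) hx
  simp only [dotProduct_add, dotProduct_smul, smul_eq_mul, hxEy] at this
  linarith

lemma saddlePoint_right_ne_zero (hC : C.PosDef) (hl : l ≤ 0) (hx : C *ᵥ x + E *ᵥ y = l • x)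
    (hx0 : x ≠ 0) : y ≠ 0 := by
  rintro rfl
  rw [mulVec_zero, add_zero] at hx
  have hpos := hC.dotProduct_mulVec_pos hx0
  rw [star_trivial, hx, dotProduct_smul, smul_eq_mul] at hpos
  nlinarith [dotProduct_self_nonneg x]

lemma saddlePoint_sq_le (hx : C *ᵥ x + E *ᵥ y = l • x) (hy : Eᵀ *ᵥ x = l • y) (hl : l ≤ 0)
    (hx0 : x ≠ 0) {μ s : ℝ} (hC : ∀ w, μ * (w ⬝ᵥ w) ≤ w ⬝ᵥ C *ᵥ w)
    (hE : ∀ u, (Eᵀ *ᵥ u) ⬝ᵥ (Eᵀ *ᵥ u) ≤ s * (u ⬝ᵥ u)) :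
    l ^ 2 ≤ μ * l + s := by
  have hp := saddlePoint_dotProduct_mulVec_eq hx hy
  have hEx := hE x
  rw [hy, smul_dotProduct, dotProduct_smul, smul_eq_mul, smul_eq_mul] at hEx
  have hCx := mul_le_mul_of_nonpos_left (hC x) hl
  rw [hp] at hCx
  refine le_of_mul_le_mul_right ?_ (dotProduct_self_pos hx0)
  linarith

lemma saddlePoint_le_sq_sub (hx : C *ᵥ x + E *ᵥ y = l • x) (hy : Eᵀ *ᵥ x = l • y) (hl : l ≤ 0)
    (hy0 : y ≠ 0) {μ s : ℝ} (hC : ∀ w, w ⬝ᵥ C *ᵥ w ≤ μ * (w ⬝ᵥ w))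
    (hC2 : ∀ w, (C *ᵥ w) ⬝ᵥ (C *ᵥ w) ≤ μ * (w ⬝ᵥ C *ᵥ w))
    (hE : ∀ z, s * (z ⬝ᵥ z) ≤ (E *ᵥ z) ⬝ᵥ (E *ᵥ z)) :
    s ≤ l ^ 2 - μ * l := by
  have hp := saddlePoint_dotProduct_mulVec_eq hx hy
  have hEy : E *ᵥ y = l • x - C *ᵥ x := eq_sub_of_add_eq' hx
  have hEy2 := hE y
  rw [hEy, sub_dotProduct, dotProduct_sub, dotProduct_sub, smul_dotProduct, dotProduct_smul,
    smul_dotProduct, dotProduct_smul, dotProduct_comm (C *ᵥ x) x] at hEy2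
  simp only [smul_eq_mul] at hEy2
  have hCx := mul_le_mul_of_nonpos_left (hC x) hl
  have hC2x := hC2 x
  rw [hp] at hEy2 hCx hC2x
  refine le_of_mul_le_mul_right ?_ (dotProduct_self_pos hy0)
  linarith

end Matrix

lemma sub_sqrt_div_two_le_of_sq_le {l μ s : ℝ} (h : l ^ 2 ≤ μ * l + s) :
    (μ - √(μ ^ 2 + 4 * s)) / 2 ≤ l := by
  have := Real.abs_le_sqrt (x := 2 * l - μ) (y := μ ^ 2 + 4 * s) (by nlinarith)
  linarith [neg_abs_le (2 * l - μ)]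

lemma le_sub_sqrt_div_two_of_le_sq {l μ s : ℝ} (hl : l ≤ 0) (hμ : 0 ≤ μ)
    (h : s ≤ l ^ 2 - μ * l) : l ≤ (μ - √(μ ^ 2 + 4 * s)) / 2 := by
  have : √(μ ^ 2 + 4 * s) ≤ μ - 2 * l := Real.sqrt_le_iff.2 ⟨by linarith, by nlinarith⟩
  linarith

theorem rusten_winther_neg_general {m n : ℕ}
    (C : Matrix (Fin m) (Fin m) ℝ) (E : Matrix (Fin m) (Fin n) ℝ)
    (hC : C.PosDef)
    (hA : (Matrix.fromBlocks C E Eᴴ (0 : Matrix (Fin n) (Fin n) ℝ)).IsHermitian)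
    (μmin μmax σmin σmax : ℝ)
    (hμmin : μmin = ⨅ i, hC.isHermitian.eigenvalues i)
    (hμmax : μmax = ⨆ i, hC.isHermitian.eigenvalues i)
    (hσmin : σmin = Real.sqrt (⨅ i, (isHermitian_conjTranspose_mul_self E).eigenvalues i))
    (hσmax : σmax = Real.sqrt (⨆ i, (isHermitian_conjTranspose_mul_self E).eigenvalues i)) :
    ∀ i, hA.eigenvalues i < 0 →
      (μmin - Real.sqrt (μmin ^ 2 + 4 * σmax ^ 2)) / 2 ≤ hA.eigenvalues i ∧
        hA.eigenvalues i ≤ (μmax - Real.sqrt (μmax ^ 2 + 4 * σmin ^ 2)) / 2 := by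
  intro i hl
  set v : Fin m ⊕ Fin n → ℝ := ⇑(hA.eigenvectorBasis i)
  have hv : v ≠ 0 := fun h =>
    hA.eigenvectorBasis.orthonormal.ne_zero i (by ext j; exact congrFun h j)
  obtain ⟨hx, hy⟩ := fromBlocks_mulVec_eq_smul (hA.mulVec_eigenvectorBasis i)
  rw [zero_mulVec, add_zero] at hy
  replace hy : Eᵀ *ᵥ (v ∘ Sum.inl) = hA.eigenvalues i • (v ∘ Sum.inr) := by
    rwa [← conjTranspose_eq_transpose_of_trivial]
  have hx0 : v ∘ Sum.inl ≠ 0 := by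
    refine fun h0 => saddlePoint_left_ne_zero hl.ne hy (fun h1 => hv ?_) h0
    rw [← Sum.elim_comp_inl_inr v, h0, h1, Sum.elim_zero_zero]
  have hy0 := saddlePoint_right_ne_zero hC hl.le hx hx0
  have hCpos : ∀ j, 0 ≤ hC.isHermitian.eigenvalues j := fun j => (hC.eigenvalues_pos j).le
  constructor
  · refine sub_sqrt_div_two_le_of_sq_le (saddlePoint_sq_le hx hy hl.le hx0
      (hμmin ▸ hC.isHermitian.iInf_eigenvalues_mul_dotProduct_self_le)
      (transpose_mulVec_dotProduct_self_le (sq_nonneg σmax) ?_))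
    exact hσmax ▸ mulVec_dotProduct_self_le_sqrt_iSup_eigenvalues_sq_mul E
  · refine le_sub_sqrt_div_two_of_le_sq hl.le (hμmax ▸ Real.iSup_nonneg hCpos)
      (saddlePoint_le_sq_sub hx hy hl.le hy0
        (hμmax ▸ hC.isHermitian.dotProduct_mulVec_le_iSup_eigenvalues_mul)
        (hC.isHermitian.mulVec_dotProduct_mulVec_le hCpos
          fun j => hμmax ▸ le_ciSup (Set.finite_range _).bddAbove j)
        (hσmin ▸ sqrt_iInf_eigenvalues_sq_mul_le E))

/-- Rusten–Winther bound on the negative eigenvalues of a saddle point matrix: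
if `C` is SPD with extreme eigenvalues `μ_min, μ_max` and `E` (with `n ≤ m`) has full column
rank and extreme singular values `σ_min, σ_max`, then every negative eigenvalue `λ` of
`A = [[C, E], [Eᵀ, 0]]` satisfies
`(μ_min − sqrt(μ_min² + 4σ_max²))/2 ≤ λ ≤ (μ_max − sqrt(μ_max² + 4σ_min²))/2`. -/
theorem rusten_winther_neg {m n : ℕ} (hmn : n ≤ m)
    (C : Matrix (Fin m) (Fin m) ℝ) (E : Matrix (Fin m) (Fin n) ℝ)
    (hC : C.PosDef) (hrank : E.rank = n)
    (hA : (Matrix.fromBlocks C E Eᴴ (0 : Matrix (Fin n) (Fin n) ℝ)).IsHermitian)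
    (μmin μmax σmin σmax : ℝ)
    (hμmin : μmin = ⨅ i, hC.isHermitian.eigenvalues i)
    (hμmax : μmax = ⨆ i, hC.isHermitian.eigenvalues i)
    (hσmin : σmin = Real.sqrt (⨅ i, (isHermitian_conjTranspose_mul_self E).eigenvalues i))
    (hσmax : σmax = Real.sqrt (⨆ i, (isHermitian_conjTranspose_mul_self E).eigenvalues i)) :
    ∀ i, hA.eigenvalues i < 0 →
      (μmin - Real.sqrt (μmin ^ 2 + 4 * σmax ^ 2)) / 2 ≤ hA.eigenvalues i ∧
        hA.eigenvalues i ≤ (μmax - Real.sqrt (μmax ^ 2 + 4 * σmin ^ 2)) / 2 :=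
  rusten_winther_neg_general C E hC hA μmin μmax σmin σmax hμmin hμmax hσmin hσmax
end

section
/- Let C ∈ ℝ^{m×m} be symmetric positive definite and E ∈ ℝ^{m×n}. Then every positive eigenvalue λ of the saddle point matrix A = [[C, E], [Eᵀ, 0]] satisfies μ_min ≤ λ ≤ (1/2)(μ_max + sqrt(μ_max² + 4σ_max²)), where μ_min, μ_max are the extreme eigenvalues of C and σ_max the largest singular value of E. -/
/-!
Let `(x, y)` be an eigenvector of `[[C, E], [Eᵀ, 0]]` for `λ > 0`. The second block row reads
`Eᵀx = λy`, so `x ≠ 0` and `xᵀEy = λ‖y‖²`; pairing the first block row with `x` then gives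
`λ‖x‖² = xᵀCx + λ‖y‖²`. Since `λ‖y‖² ≥ 0`, the Rayleigh bound `xᵀCx ≥ μ_min‖x‖²` yields
`λ ≥ μ_min`. For the upper bound, `λ²‖y‖² = ‖Eᵀx‖² ≤ σ_max²‖x‖²`, so multiplying the identity by
`λ` gives `λ² ≤ μ_max λ + σ_max²`, and `λ` is at most the larger root of `t² - μ_max t - σ_max²`.
-/

open Matrix

namespace Matrix

section Rayleigh

open scoped MatrixOrder ComplexOrder

variable {𝕜 ι : Type*} [RCLike 𝕜] [Fintype ι] [DecidableEq ι] {M : Matrix ι ι 𝕜}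

theorem IsHermitian.le_algebraMap_iSup_eigenvalues (hM : M.IsHermitian) :
    M ≤ algebraMap ℝ (Matrix ι ι 𝕜) (⨆ i, hM.eigenvalues i) :=
  le_algebraMap_of_spectrum_le (fun r hr => by
    obtain ⟨i, rfl⟩ := hM.spectrum_real_eq_range_eigenvalues ▸ hr
    exact le_ciSup (Finite.bddAbove_range _) i) hM.isSelfAdjoint

theorem IsHermitian.algebraMap_iInf_eigenvalues_le (hM : M.IsHermitian) :
    algebraMap ℝ (Matrix ι ι 𝕜) (⨅ i, hM.eigenvalues i) ≤ M :=
  algebraMap_le_of_le_spectrum (fun r hr => by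
    obtain ⟨i, rfl⟩ := hM.spectrum_real_eq_range_eigenvalues ▸ hr
    exact ciInf_le (Finite.bddBelow_range _) i) hM.isSelfAdjoint

theorem IsHermitian.dotProduct_mulVec_le_iSup_eigenvalues_smul (hM : M.IsHermitian)
    (x : ι → 𝕜) : star x ⬝ᵥ (M *ᵥ x) ≤ (⨆ i, hM.eigenvalues i) • (star x ⬝ᵥ x) := by
  have := (le_iff.mp hM.le_algebraMap_iSup_eigenvalues).dotProduct_mulVec_nonneg x
  rwa [Algebra.algebraMap_eq_smul_one, sub_mulVec, dotProduct_sub, smul_mulVec, one_mulVec,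
    dotProduct_smul, sub_nonneg] at this

theorem IsHermitian.iInf_eigenvalues_smul_le_dotProduct_mulVec (hM : M.IsHermitian)
    (x : ι → 𝕜) : (⨅ i, hM.eigenvalues i) • (star x ⬝ᵥ x) ≤ star x ⬝ᵥ (M *ᵥ x) := by
  have := (le_iff.mp hM.algebraMap_iInf_eigenvalues_le).dotProduct_mulVec_nonneg x
  rwa [Algebra.algebraMap_eq_smul_one, sub_mulVec, dotProduct_sub, smul_mulVec, one_mulVec,
    dotProduct_smul, sub_nonneg] at this

theorem PosSemidef.iSup_eigenvalues_nonneg (hM : M.PosSemidef) :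
    0 ≤ ⨆ i, hM.isHermitian.eigenvalues i :=
  Real.iSup_nonneg hM.eigenvalues_nonneg

theorem star_mulVec_dotProduct_mulVec_le {κ : Type*} [Fintype κ] (E : Matrix κ ι 𝕜) (y : ι → 𝕜) :
    star (E *ᵥ y) ⬝ᵥ (E *ᵥ y) ≤
      (⨆ j, (isHermitian_conjTranspose_mul_self E).eigenvalues j) • (star y ⬝ᵥ y) := by
  simpa [star_mulVec, dotProduct_mulVec, vecMul_vecMul] using
    (isHermitian_conjTranspose_mul_self E).dotProduct_mulVec_le_iSup_eigenvalues_smul y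

end Rayleigh

section OrderedRing

variable {R ι : Type*} [CommRing R] [LinearOrder R] [IsStrictOrderedRing R] [Fintype ι]

theorem dotProduct_self_nonneg_s7 (v : ι → R) : 0 ≤ v ⬝ᵥ v :=
  Finset.sum_nonneg fun i _ => mul_self_nonneg (v i)

theorem dotProduct_self_pos_s7 {v : ι → R} (hv : v ≠ 0) : 0 < v ⬝ᵥ v :=
  (dotProduct_self_nonneg_s7 v).lt_of_ne' (dotProduct_self_eq_zero.not.mpr hv)

theorem dotProduct_sq_le_dotProduct_self_mul (v w : ι → R) :
    (v ⬝ᵥ w) ^ 2 ≤ (v ⬝ᵥ v) * (w ⬝ᵥ w) := by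
  simpa only [dotProduct, ← sq] using Finset.sum_mul_sq_le_sq_mul_sq Finset.univ v w

end OrderedRing

/-- `σ_max` is defined through `EᴴE`, so the bound for `Eᴴ` passes through
`‖Eᴴx‖² = ⟨x, E Eᴴx⟩` and Cauchy–Schwarz. -/
theorem conjTranspose_mulVec_dotProduct_self_le {ι κ : Type*} [Fintype ι] [Fintype κ]
    [DecidableEq κ] (E : Matrix ι κ ℝ) (x : ι → ℝ) :
    (Eᴴ *ᵥ x) ⬝ᵥ (Eᴴ *ᵥ x) ≤
      (⨆ j, (isHermitian_conjTranspose_mul_self E).eigenvalues j) * (x ⬝ᵥ x) := by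
  set s := ⨆ j, (isHermitian_conjTranspose_mul_self E).eigenvalues j
  set z := Eᴴ *ᵥ x
  have hs : 0 ≤ s := (posSemidef_conjTranspose_mul_self E).iSup_eigenvalues_nonneg
  have hz : z ⬝ᵥ z = x ⬝ᵥ (E *ᵥ z) := by
    rw [dotProduct_mulVec, conjTranspose_eq_transpose_of_trivial, vecMul_transpose,
      dotProduct_comm]
  have hEz : (E *ᵥ z) ⬝ᵥ (E *ᵥ z) ≤ s * (z ⬝ᵥ z) := by
    simpa only [star_trivial, smul_eq_mul] using E.star_mulVec_dotProduct_mulVec_le z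
  have hcs : (z ⬝ᵥ z) * (z ⬝ᵥ z) ≤ (s * (x ⬝ᵥ x)) * (z ⬝ᵥ z) := by
    calc (z ⬝ᵥ z) * (z ⬝ᵥ z) = (x ⬝ᵥ (E *ᵥ z)) ^ 2 := by rw [← hz, sq]
      _ ≤ (x ⬝ᵥ x) * ((E *ᵥ z) ⬝ᵥ (E *ᵥ z)) := dotProduct_sq_le_dotProduct_self_mul _ _
      _ ≤ (x ⬝ᵥ x) * (s * (z ⬝ᵥ z)) := by gcongr; exact dotProduct_self_nonneg_s7 x
      _ = (s * (x ⬝ᵥ x)) * (z ⬝ᵥ z) := by ring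
  rcases (dotProduct_self_nonneg_s7 z).eq_or_lt with hz0 | hzpos
  · exact hz0 ▸ mul_nonneg hs (dotProduct_self_nonneg_s7 x)
  · exact le_of_mul_le_mul_right hcs hzpos

theorem fromBlocks_mulVec_sumElim_eq_smul_iff {ι κ R : Type*} [CommRing R] [Fintype ι]
    [Fintype κ] {A : Matrix ι ι R} {B : Matrix ι κ R} {C : Matrix κ ι R} {D : Matrix κ κ R}
    {x : ι → R} {y : κ → R} {l : R} :
    fromBlocks A B C D *ᵥ Sum.elim x y = l • Sum.elim x y ↔
      A *ᵥ x + B *ᵥ y = l • x ∧ C *ᵥ x + D *ᵥ y = l • y := by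
  rw [fromBlocks_mulVec, ← Sum.elim_comp_inl_inr (l • Sum.elim x y), Sum.elim_eq_iff]
  rfl

end Matrix

theorem le_half_add_sqrt_of_sq_le {t q r : ℝ} (h : t ^ 2 ≤ q * t + r) :
    t ≤ (q + √(q ^ 2 + 4 * r)) / 2 := by
  have := Real.abs_le_sqrt (x := 2 * t - q) (y := q ^ 2 + 4 * r) (by nlinarith)
  linarith [le_abs_self (2 * t - q)]

theorem saddlePoint_fst_ne_zero {ι κ : Type*} [Fintype ι] {E : Matrix ι κ ℝ} {x : ι → ℝ}
    {y : κ → ℝ} {l : ℝ} (hl : l ≠ 0) (hxy : Sum.elim x y ≠ 0) (h₂ : Eᴴ *ᵥ x = l • y) :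
    x ≠ 0 := by
  rintro rfl
  have hy : y = 0 := by simpa [hl, eq_comm] using h₂
  exact hxy (by simp [hy])

section SaddlePoint

variable {ι κ : Type*} [Fintype ι] [Fintype κ]
  {C : Matrix ι ι ℝ} {E : Matrix ι κ ℝ} {x : ι → ℝ} {y : κ → ℝ} {l : ℝ}

theorem saddlePoint_dotProduct_mulVec_eq (h₂ : Eᴴ *ᵥ x = l • y) :
    x ⬝ᵥ (E *ᵥ y) = l * (y ⬝ᵥ y) := by
  rw [dotProduct_mulVec, ← mulVec_transpose, ← conjTranspose_eq_transpose_of_trivial, h₂,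
    smul_dotProduct, smul_eq_mul, dotProduct_comm]

theorem saddlePoint_energy_eq (h₁ : C *ᵥ x + E *ᵥ y = l • x) (h₂ : Eᴴ *ᵥ x = l • y) :
    l * (x ⬝ᵥ x) = x ⬝ᵥ (C *ᵥ x) + l * (y ⬝ᵥ y) := by
  rw [← saddlePoint_dotProduct_mulVec_eq h₂, ← dotProduct_add, h₁, dotProduct_smul, smul_eq_mul]

theorem saddlePoint_sq_mul_dotProduct_le [DecidableEq κ] (h₂ : Eᴴ *ᵥ x = l • y) :
    l ^ 2 * (y ⬝ᵥ y) ≤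
      (⨆ j, (isHermitian_conjTranspose_mul_self E).eigenvalues j) * (x ⬝ᵥ x) := by
  calc l ^ 2 * (y ⬝ᵥ y) = (Eᴴ *ᵥ x) ⬝ᵥ (Eᴴ *ᵥ x) := by
        rw [h₂, smul_dotProduct, dotProduct_smul, smul_eq_mul, smul_eq_mul]; ring
    _ ≤ _ := E.conjTranspose_mulVec_dotProduct_self_le x

theorem iInf_eigenvalues_le_of_saddlePoint [DecidableEq ι] (hC : C.IsHermitian) (hl : 0 < l)
    (hx : x ≠ 0) (h₁ : C *ᵥ x + E *ᵥ y = l • x) (h₂ : Eᴴ *ᵥ x = l • y) :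
    (⨅ i, hC.eigenvalues i) ≤ l := by
  have hray : (⨅ i, hC.eigenvalues i) * (x ⬝ᵥ x) ≤ x ⬝ᵥ (C *ᵥ x) := by
    simpa using hC.iInf_eigenvalues_smul_le_dotProduct_mulVec x
  have hy : 0 ≤ l * (y ⬝ᵥ y) := mul_nonneg hl.le (dotProduct_self_nonneg_s7 y)
  refine le_of_mul_le_mul_right ?_ (dotProduct_self_pos_s7 hx)
  linarith [saddlePoint_energy_eq h₁ h₂]

theorem sq_le_of_saddlePoint [DecidableEq ι] [DecidableEq κ] (hC : C.IsHermitian) (hl : 0 < l)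
    (hx : x ≠ 0) (h₁ : C *ᵥ x + E *ᵥ y = l • x) (h₂ : Eᴴ *ᵥ x = l • y) :
    l ^ 2 ≤ (⨆ i, hC.eigenvalues i) * l +
      ⨆ j, (isHermitian_conjTranspose_mul_self E).eigenvalues j := by
  have hray : x ⬝ᵥ (C *ᵥ x) ≤ (⨆ i, hC.eigenvalues i) * (x ⬝ᵥ x) := by
    simpa using hC.dotProduct_mulVec_le_iSup_eigenvalues_smul x
  refine le_of_mul_le_mul_right ?_ (dotProduct_self_pos_s7 hx)
  nlinarith [saddlePoint_energy_eq h₁ h₂, saddlePoint_sq_mul_dotProduct_le h₂,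
    mul_le_mul_of_nonneg_left hray hl.le]

end SaddlePoint

/-- Rusten–Winther bound on the positive eigenvalues of a saddle point matrix:
if `C` is SPD with extreme eigenvalues `μ_min, μ_max` and `E` has largest singular value
`σ_max`, then every positive eigenvalue `λ` of `A = [[C, E], [Eᵀ, 0]]` satisfies
`μ_min ≤ λ ≤ (μ_max + sqrt(μ_max² + 4σ_max²))/2`. -/
theorem rusten_winther_pos {m n : ℕ}
    (C : Matrix (Fin m) (Fin m) ℝ) (E : Matrix (Fin m) (Fin n) ℝ) (hC : C.PosDef)
    (hA : (Matrix.fromBlocks C E Eᴴ (0 : Matrix (Fin n) (Fin n) ℝ)).IsHermitian)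
    (μmin μmax σmax : ℝ)
    (hμmin : μmin = ⨅ i, hC.isHermitian.eigenvalues i)
    (hμmax : μmax = ⨆ i, hC.isHermitian.eigenvalues i)
    (hσmax : σmax = Real.sqrt (⨆ i, (isHermitian_conjTranspose_mul_self E).eigenvalues i)) :
    ∀ i, 0 < hA.eigenvalues i →
      μmin ≤ hA.eigenvalues i ∧
        hA.eigenvalues i ≤ (μmax + Real.sqrt (μmax ^ 2 + 4 * σmax ^ 2)) / 2 := by
  intro i hl
  obtain ⟨x, y, hv⟩ : ∃ x y, Sum.elim x y = ⇑(hA.eigenvectorBasis i) :=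
    ⟨_, _, Sum.elim_comp_inl_inr _⟩
  have hxy : Sum.elim x y ≠ 0 := by
    simpa [hv] using hA.eigenvectorBasis.orthonormal.ne_zero i
  obtain ⟨h₁, h₂⟩ := fromBlocks_mulVec_sumElim_eq_smul_iff.mp (hv ▸ hA.mulVec_eigenvectorBasis i)
  rw [zero_mulVec, add_zero] at h₂
  have hx := saddlePoint_fst_ne_zero hl.ne' hxy h₂
  have hσ : σmax ^ 2 = ⨆ j, (isHermitian_conjTranspose_mul_self E).eigenvalues j := by
    rw [hσmax, Real.sq_sqrt (posSemidef_conjTranspose_mul_self E).iSup_eigenvalues_nonneg]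
  subst hμmin hμmax
  exact ⟨iInf_eigenvalues_le_of_saddlePoint hC.isHermitian hl hx h₁ h₂,
    le_half_add_sqrt_of_sq_le (hσ ▸ sq_le_of_saddlePoint hC.isHermitian hl hx h₁ h₂)⟩
end

section
/- With D, L, G as above (D SPD with extreme eigenvalues ψ_min, ψ_max; L with largest singular value σ_max; G = HᵀR^{-1}H PSD with largest eigenvalue ν_max), every negative eigenvalue ζ of A₂ = [[D, L], [Lᵀ, −G]] satisfies ζ ≥ (1/2)(ψ_min − ν_max − sqrt((ψ_min + ν_max)² + 4σ_max²)). -/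
/-!
Rayleigh quotients bound the spectrum of a symmetric matrix from both sides, so it suffices to
show `λ ‖w‖² ≤ wᵀ A₂ w` for every `w = (u, v)`, with `λ` the claimed bound. The form splits as
`uᵀDu + 2 uᵀLv - vᵀGv ≥ ψ_min a² - 2 σ_max a b - ν_max b²` with `a = ‖u‖`, `b = ‖v‖`
(Cauchy–Schwarz for the cross term), and `λ` is exactly the smallest eigenvalue of the
`2 × 2` form on the right.
-/

open Matrix
open scoped MatrixOrder

namespace Matrix

theorem dotProduct_self_nonneg_s10 {n R : Type*} [Fintype n] [Ring R] [LinearOrder R]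
    [IsStrictOrderedRing R] (v : n → R) : 0 ≤ v ⬝ᵥ v :=
  Finset.sum_nonneg fun i _ => mul_self_nonneg (v i)

namespace IsHermitian

variable {n : Type*} [Fintype n] [DecidableEq n] {A : Matrix n n ℝ} (hA : A.IsHermitian) {c : ℝ}
include hA

theorem posSemidef_sub_smul_one_iff : (A - c • 1).PosSemidef ↔ ∀ i, c ≤ hA.eigenvalues i := by
  rw [← le_iff, ← Algebra.algebraMap_eq_smul_one,
    algebraMap_le_iff_le_spectrum (a := A) hA.isSelfAdjoint,
    hA.spectrum_real_eq_range_eigenvalues, Set.forall_mem_range]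

theorem posSemidef_smul_one_sub_iff : (c • 1 - A).PosSemidef ↔ ∀ i, hA.eigenvalues i ≤ c := by
  rw [← le_iff, ← Algebra.algebraMap_eq_smul_one,
    le_algebraMap_iff_spectrum_le (a := A) hA.isSelfAdjoint,
    hA.spectrum_real_eq_range_eigenvalues, Set.forall_mem_range]

theorem le_eigenvalues_iff_forall_mul_dotProduct_le :
    (∀ i, c ≤ hA.eigenvalues i) ↔ ∀ x, c * (x ⬝ᵥ x) ≤ x ⬝ᵥ (A *ᵥ x) := by
  rw [← hA.posSemidef_sub_smul_one_iff, posSemidef_iff_dotProduct_mulVec,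
    and_iff_right (hA.sub (isHermitian_one.smul (.all c)))]
  simp only [star_trivial, sub_mulVec, smul_mulVec, one_mulVec, dotProduct_sub, dotProduct_smul,
    smul_eq_mul, sub_nonneg]

theorem eigenvalues_le_iff_forall_dotProduct_le_mul :
    (∀ i, hA.eigenvalues i ≤ c) ↔ ∀ x, x ⬝ᵥ (A *ᵥ x) ≤ c * (x ⬝ᵥ x) := by
  rw [← hA.posSemidef_smul_one_sub_iff, posSemidef_iff_dotProduct_mulVec,
    and_iff_right ((isHermitian_one.smul (.all c)).sub hA)]
  simp only [star_trivial, sub_mulVec, smul_mulVec, one_mulVec, dotProduct_sub, dotProduct_smul,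
    smul_eq_mul, sub_nonneg]

end IsHermitian

theorem abs_dotProduct_mulVec_le {m n : Type*} [Fintype m] [Fintype n] [DecidableEq n]
    (L : Matrix m n ℝ) {S : ℝ}
    (hS : ∀ i, (isHermitian_conjTranspose_mul_self L).eigenvalues i ≤ S) (u : m → ℝ) (v : n → ℝ) :
    |u ⬝ᵥ (L *ᵥ v)| ≤ √S * √(u ⬝ᵥ u) * √(v ⬝ᵥ v) := by
  have hLv : L *ᵥ v ⬝ᵥ L *ᵥ v ≤ S * (v ⬝ᵥ v) := by
    have := ((isHermitian_conjTranspose_mul_self L).eigenvalues_le_iff_forall_dotProduct_le_mul.mp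
      hS) v
    rwa [← mulVec_mulVec, dotProduct_mulVec, conjTranspose_eq_transpose_of_trivial,
      vecMul_transpose, dotProduct_comm] at this
  have hcs : (u ⬝ᵥ L *ᵥ v) ^ 2 ≤ (u ⬝ᵥ u) * (L *ᵥ v ⬝ᵥ L *ᵥ v) := by
    simpa only [dotProduct, sq] using Finset.sum_mul_sq_le_sq_mul_sq Finset.univ u (L *ᵥ v)
  have hu := dotProduct_self_nonneg_s10 u
  rw [← Real.sqrt_mul' _ hu, ← Real.sqrt_mul' _ (dotProduct_self_nonneg_s10 v)]
  exact Real.abs_le_sqrt (by nlinarith [mul_le_mul_of_nonneg_left hLv hu])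

theorem sumElim_dotProduct_fromBlocks_mulVec_sumElim {m n α : Type*} [Fintype m] [Fintype n]
    [CommRing α] (A : Matrix m m α) (B : Matrix m n α) (C : Matrix n n α) (u : m → α)
    (v : n → α) :
    Sum.elim u v ⬝ᵥ (fromBlocks A B Bᵀ C *ᵥ Sum.elim u v) =
      u ⬝ᵥ (A *ᵥ u) + 2 * (u ⬝ᵥ (B *ᵥ v)) + v ⬝ᵥ (C *ᵥ v) := by
  rw [fromBlocks_mulVec, sumElim_dotProduct_sumElim, dotProduct_add, dotProduct_add,
    Sum.elim_comp_inl, Sum.elim_comp_inr, dotProduct_mulVec v, vecMul_transpose,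
    dotProduct_comm (B *ᵥ v)]
  ring

end Matrix

/- `λ` is the smaller eigenvalue of `[[ψ, -σ], [-σ, -ν]]`: `p = 2 (ψ - λ)` and `q = 2 (-ν - λ)` are
nonnegative with `p q = 4 σ²`, and `p` times the shifted form is `(p a - 2 σ b)²`. -/
theorem smallest_eig_mul_sq_add_sq_le (ψ ν σ a b : ℝ) :
    (ψ - ν - √((ψ + ν) ^ 2 + 4 * σ ^ 2)) / 2 * (a ^ 2 + b ^ 2) ≤
      ψ * a ^ 2 - 2 * σ * a * b - ν * b ^ 2 := by
  set s := √((ψ + ν) ^ 2 + 4 * σ ^ 2)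
  have hs : s ^ 2 = (ψ + ν) ^ 2 + 4 * σ ^ 2 := Real.sq_sqrt (by positivity)
  obtain ⟨hp, hq⟩ := abs_le.mp (Real.abs_le_sqrt (by nlinarith [sq_nonneg σ]) : |ψ + ν| ≤ s)
  set p := ψ + ν + s
  set q := s - ψ - ν
  have hpq : p * q = 4 * σ ^ 2 := by linear_combination hs
  have hshifted : 0 ≤ p * a ^ 2 - 4 * σ * a * b + q * b ^ 2 := by
    rcases (show 0 ≤ p by linarith).eq_or_lt with hp0 | hp0
    · have hσ : σ = 0 := by nlinarith
      rw [← hp0, hσ]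
      nlinarith
    · refine (mul_nonneg_iff_of_pos_left hp0).mp ?_
      nlinarith [sq_nonneg (p * a - 2 * σ * b)]
  linarith

/-- Lower bound for the negative eigenvalues of `A₂ = [[D, L], [Lᵀ, −G]]`, with `D` SPD
(extreme eigenvalues `ψ_min, ψ_max`), `L` with largest singular value `σ_max`, and `G` PSD with
largest eigenvalue `ν_max`: every negative eigenvalue `ζ` satisfies
`ζ ≥ (ψ_min − ν_max − sqrt((ψ_min + ν_max)² + 4σ_max²))/2`. -/
theorem A2_neg_eig_lower_bound {m : ℕ}
    (D L G : Matrix (Fin m) (Fin m) ℝ) (hD : D.PosDef) (hG : G.PosSemidef)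
    (hA2 : (Matrix.fromBlocks D L Lᴴ (-G)).IsHermitian)
    (ψmin νmax σmax : ℝ)
    (hψmin : ψmin = ⨅ i, hD.isHermitian.eigenvalues i)
    (hνmax : νmax = ⨆ i, hG.isHermitian.eigenvalues i)
    (hσmax : σmax = Real.sqrt (⨆ i, (isHermitian_conjTranspose_mul_self L).eigenvalues i)) :
    ∀ i, hA2.eigenvalues i < 0 →
      (ψmin - νmax - Real.sqrt ((ψmin + νmax) ^ 2 + 4 * σmax ^ 2)) / 2 ≤
        hA2.eigenvalues i := by
  intro i _
  refine (hA2.le_eigenvalues_iff_forall_mul_dotProduct_le.mpr (fun x => ?_)) i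
  obtain ⟨u, v, rfl⟩ : ∃ u v, x = Sum.elim u v := ⟨_, _, (Sum.elim_comp_inl_inr x).symm⟩
  have hDu := hD.isHermitian.le_eigenvalues_iff_forall_mul_dotProduct_le.mp
    (fun j => hψmin ▸ ciInf_le (Finite.bddBelow_range _) j) u
  have hGv := hG.isHermitian.eigenvalues_le_iff_forall_dotProduct_le_mul.mp
    (fun j => hνmax ▸ le_ciSup (Finite.bddAbove_range _) j) v
  have hLuv := hσmax ▸ abs_dotProduct_mulVec_le L (le_ciSup (Finite.bddAbove_range _)) u v
  have hform := smallest_eig_mul_sq_add_sq_le ψmin νmax σmax √(u ⬝ᵥ u) √(v ⬝ᵥ v)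
  rw [Real.sq_sqrt (dotProduct_self_nonneg_s10 u), Real.sq_sqrt (dotProduct_self_nonneg_s10 v)] at hform
  rw [conjTranspose_eq_transpose_of_trivial, sumElim_dotProduct_fromBlocks_mulVec_sumElim,
    sumElim_dotProduct_sumElim, neg_mulVec, dotProduct_neg]
  linarith [neg_abs_le (u ⬝ᵥ L *ᵥ v)]
end
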